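/- Let L be a unimodular even lattice containing S ⊕ T with both S and T primitive and S^⊥ = T. Then |disc S| = |disc T|, and the anti-isometry ψ arising from the kernel is defined on all of disc S, giving an anti-isomorphism disc S → disc T. -/

import Mathlib

open Matrix

/-- The group `ℚ/2ℤ`. -/
abbrev QMod2 : Type := ℚ ⧸ AddSubgroup.zmultiples (2 : ℚ)
/-- The group `ℚ/ℤ`. -/
abbrev QMod1 : Type := ℚ ⧸ AddSubgroup.zmultiples (1 : ℚ)

/-- The natural isomorphism `2 : ℚ/ℤ → ℚ/2ℤ`, `r ↦ 2r`. -/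
def twoHom : QMod1 →+ QMod2 :=
  QuotientAddGroup.map _ _ (AddMonoidHom.mk' (fun r : ℚ => 2 * r) (fun a b => by ring))
    (by
      intro x hx
      obtain ⟨k, hk⟩ := AddSubgroup.mem_zmultiples_iff.mp hx
      refine AddSubgroup.mem_comap.mpr (AddSubgroup.mem_zmultiples_iff.mpr ⟨k, ?_⟩)
      simp only [AddMonoidHom.mk'_apply]
      rw [← hk]
      simp [zsmul_eq_mul]
      ring)

variable {ι : Type} [Fintype ι]

/-- The `ℚ`-bilinear extension of the bilinear form with integral Gram matrix `M`. -/
def Bq (M : Matrix ι ι ℤ) (x y : ι → ℚ) : ℚ := x ⬝ᵥ (M.map (Int.cast : ℤ → ℚ)).mulVec y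

/-- A rational number is integral. -/
def IsInt (r : ℚ) : Prop := ∃ z : ℤ, r = (z : ℚ)

/-- The lattice `L` itself, i.e. the integral vectors, as a subgroup of `L ⊗ ℚ = ι → ℚ`. -/
def intSub (ι : Type) [Fintype ι] : AddSubgroup (ι → ℚ) where
  carrier := {x | ∀ i, IsInt (x i)}
  add_mem' := by
    rintro a b ha hb i
    obtain ⟨z, hz⟩ := ha i; obtain ⟨w, hw⟩ := hb i
    exact ⟨z + w, by simp [Pi.add_apply, hz, hw]⟩
  zero_mem' := fun i => ⟨0, by simp⟩
  neg_mem' := by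
    rintro a ha i
    obtain ⟨z, hz⟩ := ha i
    exact ⟨-z, by simp [Pi.neg_apply, hz]⟩

/-- The dual lattice of a subgroup `A ⊂ L ⊗ ℚ` w.r.t. the form `M`:
all vectors pairing integrally with all of `A`. -/
def dualOf (M : Matrix ι ι ℤ) (A : AddSubgroup (ι → ℚ)) : AddSubgroup (ι → ℚ) where
  carrier := {x | ∀ y ∈ A, IsInt (Bq M x y)}
  add_mem' := by
    rintro a b ha hb y hy
    obtain ⟨z, hz⟩ := ha y hy; obtain ⟨w, hw⟩ := hb y hy
    refine ⟨z + w, ?_⟩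
    have h : Bq M (a + b) y = Bq M a y + Bq M b y := by
      simp [Bq, add_dotProduct]
    rw [h, hz, hw]; push_cast; ring
  zero_mem' := by
    intro y hy
    exact ⟨0, by simp [Bq]⟩
  neg_mem' := by
    rintro a ha y hy
    obtain ⟨z, hz⟩ := ha y hy
    refine ⟨-z, ?_⟩
    have h : Bq M (-a) y = -Bq M a y := by simp [Bq, neg_dotProduct]
    rw [h, hz]; push_cast; ring

/-- The dual lattice `L^∨`. -/
abbrev dualSub (M : Matrix ι ι ℤ) : AddSubgroup (ι → ℚ) := dualOf M (intSub ι)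

/-- The discriminant group `disc L = L^∨/L`. -/
abbrev discQuot (M : Matrix ι ι ℤ) : Type :=
  dualSub M ⧸ (intSub ι).addSubgroupOf (dualSub M)

/-!
For `u ∈ S^∨` the functional `y ↦ ⟨u, y₁⟩ mod ℤ` on `L` depends only on `y₂`, by primitivity;
by divisibility of `ℚ/ℤ` and nondegeneracy of `T` it is `y ↦ -⟨v, y₂⟩` for some `v`, so
`(u, v) ∈ L^∨ = L`. Hence both projections `L → disc S` and `L → disc T` are onto, and by
primitivity both have kernel `S ⊕ T`, which gives `disc S ≅ L ⧸ (S ⊕ T) ≅ disc T`. If `ψ [u] = [v]`,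
then `(u, v) ∈ L`, so evenness of `L` makes `q(u) + q(v)` even.
-/

open QuotientAddGroup

lemma mk_eq_zero_iff_isInt {r : ℚ} : (mk r : QMod1) = 0 ↔ IsInt r := by
  rw [eq_zero_iff, AddSubgroup.mem_zmultiples_iff]
  exact ⟨fun ⟨k, hk⟩ => ⟨k, by simp [← hk]⟩, fun ⟨z, hz⟩ => ⟨z, by simp [hz]⟩⟩

lemma exists_addMonoidHom_comp_eq_of_ker_le {A B Q : Type*} [AddCommGroup A] [AddCommGroup B]
    [AddCommGroup Q] [DivisibleBy Q ℤ] (β : A →+ B) (α : A →+ Q) (h : β.ker ≤ α.ker) :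
    ∃ g : B →+ Q, g.comp β = α := by
  obtain ⟨g, hg⟩ := (Module.Baer.of_divisible Q).extension_property_addMonoidHom
    (kerLift β) (kerLift_injective β) (lift β.ker α h)
  exact ⟨g, AddMonoidHom.ext fun a => DFunLike.congr_fun hg (a : A ⧸ β.ker)⟩

lemma Bq_add_right (M : Matrix ι ι ℤ) (x y z : ι → ℚ) :
    Bq M x (y + z) = Bq M x y + Bq M x z := by
  simp [Bq, mulVec_add, dotProduct_add]

@[simp]
lemma Bq_zero_left (M : Matrix ι ι ℤ) (y : ι → ℚ) : Bq M 0 y = 0 := by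
  simp [Bq]

@[simp]
lemma Bq_zero_right (M : Matrix ι ι ℤ) (x : ι → ℚ) : Bq M x 0 = 0 := by
  simp [Bq]

/-- The vectors pairing integrally with `ℤ^ι` from the left are the `M⁻¹ z` with `z` integral,
so a character is pinned down there by its values `g (M⁻¹ eᵢ)`. -/
lemma exists_mk_Bq_eq [DecidableEq ι] (M : Matrix ι ι ℤ) (hd : M.det ≠ 0) (g : (ι → ℚ) →+ QMod1) :
    ∃ v : ι → ℚ, ∀ t, (∀ l ∈ intSub ι, IsInt (Bq M l t)) → (mk (Bq M v t) : QMod1) = g t := by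
  set Mq := M.map (Int.cast : ℤ → ℚ)
  have hMq : IsUnit Mq.det := by
    rw [isUnit_iff_ne_zero, show Mq = (Int.castRingHom ℚ).mapMatrix M from rfl,
      ← RingHom.map_det]
    simpa using hd
  let h : (ι → ℤ) →ₗ[ℤ] QMod1 := (g.comp ((Mq⁻¹.mulVecLin.toAddMonoidHom).comp
    ((Int.castAddHom ℚ).compLeft ι))).toIntLinearMap
  choose r hr using fun i => mk_surjective (h fun j => if i = j then 1 else 0)
  refine ⟨r, fun t ht => ?_⟩
  choose z hz using fun i => ht (Pi.single i 1) fun j => by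
    rcases eq_or_ne j i with rfl | hij
    exacts [⟨1, by simp⟩, ⟨0, by simp [hij]⟩]
  have hMt : Mq *ᵥ t = fun i => (z i : ℚ) := by
    funext i
    rw [← hz i, Bq, single_one_dotProduct]
  calc (mk (Bq M r t) : QMod1) = mk (r ⬝ᵥ fun i => (z i : ℚ)) := by rw [← hMt]; rfl
    _ = ∑ i, z i • h fun j => if i = j then 1 else 0 := by
        rw [dotProduct, ← mk'_apply, map_sum]
        refine Finset.sum_congr rfl fun i _ => ?_
        rw [← hr, mul_comm, ← zsmul_eq_mul, map_zsmul]; rfl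
    _ = g t := by
        rw [← LinearMap.pi_apply_eq_sum_univ]
        change g (Mq⁻¹ *ᵥ fun i => (z i : ℚ)) = g t
        rw [← hMt, mulVec_mulVec, nonsing_inv_mul _ hMq, one_mulVec]

/-- Extend `γ mod ℤ` from `A ⧸ ker β ↪ ℚ^ι` to all of `ℚ^ι` by divisibility of `ℚ/ℤ`. -/
lemma exists_isInt_add_Bq [DecidableEq ι] {A : Type*} [AddCommGroup A] (M : Matrix ι ι ℤ)
    (hd : M.det ≠ 0) (β : A →+ ι → ℚ) (hβ : ∀ a, ∀ l ∈ intSub ι, IsInt (Bq M l (β a)))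
    (γ : A →+ ℚ) (hker : ∀ a, β a = 0 → IsInt (γ a)) :
    ∃ v : ι → ℚ, ∀ a, IsInt (γ a + Bq M v (β a)) := by
  obtain ⟨g, hg⟩ := exists_addMonoidHom_comp_eq_of_ker_le β ((mk' _).comp γ) fun a ha =>
    AddMonoidHom.mem_ker.mpr (mk_eq_zero_iff_isInt.mpr (hker a ha))
  obtain ⟨v, hv⟩ := exists_mk_Bq_eq M hd (-g)
  refine ⟨v, fun a => mk_eq_zero_iff_isInt.mp ?_⟩
  rw [mk_add, hv _ (hβ a), ← mk'_apply, ← AddMonoidHom.comp_apply, ← hg]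
  simp

lemma exists_addEquiv_comp_eq_of_ker_eq {A Q₁ Q₂ : Type*} [AddGroup A] [AddGroup Q₁]
    [AddGroup Q₂] (π₁ : A →+ Q₁) (π₂ : A →+ Q₂) (h₁ : Function.Surjective π₁)
    (h₂ : Function.Surjective π₂) (hker : π₁.ker = π₂.ker) :
    ∃ ψ : Q₁ ≃+ Q₂, ∀ a, ψ (π₁ a) = π₂ a :=
  ⟨(quotientKerEquivOfSurjective π₁ h₁).symm.trans
    ((quotientAddEquivOfEq hker).trans (quotientKerEquivOfSurjective π₂ h₂)), fun a => by
    have h : (quotientKerEquivOfSurjective π₁ h₁).symm (π₁ a) = mk a := by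
      rw [AddEquiv.symm_apply_eq]; rfl
    rw [AddEquiv.trans_apply, h]; rfl⟩

section Gluing

variable {ι₁ ι₂ : Type} [Fintype ι₁] [Fintype ι₂] {M₁ : Matrix ι₁ ι₁ ℤ} {M₂ : Matrix ι₂ ι₂ ℤ}
  {L : AddSubgroup ((ι₁ → ℚ) × (ι₂ → ℚ))}

lemma fst_mem_dualSub (hSL : (intSub ι₁).prod (intSub ι₂) ≤ L)
    (hint : ∀ x ∈ L, ∀ y ∈ L, IsInt (Bq M₁ x.1 y.1 + Bq M₂ x.2 y.2)) {x} (hx : x ∈ L) :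
    x.1 ∈ dualSub M₁ := fun l hl => by
  simpa using hint x hx (l, 0) (hSL ⟨hl, zero_mem _⟩)

lemma snd_mem_dualSub (hSL : (intSub ι₁).prod (intSub ι₂) ≤ L)
    (hint : ∀ x ∈ L, ∀ y ∈ L, IsInt (Bq M₁ x.1 y.1 + Bq M₂ x.2 y.2)) {x} (hx : x ∈ L) :
    x.2 ∈ dualSub M₂ := fun l hl => by
  simpa using hint x hx (0, l) (hSL ⟨zero_mem _, hl⟩)

lemma fst_mem_intSub_iff_snd_mem_intSub (hSL : (intSub ι₁).prod (intSub ι₂) ≤ L)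
    (hprim₁ : ∀ x ∈ L, x.2 = 0 → x.1 ∈ intSub ι₁) (hprim₂ : ∀ x ∈ L, x.1 = 0 → x.2 ∈ intSub ι₂)
    {x} (hx : x ∈ L) : x.1 ∈ intSub ι₁ ↔ x.2 ∈ intSub ι₂ := by
  constructor
  · intro h
    simpa using hprim₂ _ (sub_mem hx (hSL (x := (x.1, 0)) ⟨h, zero_mem _⟩)) (by simp)
  · intro h
    simpa using hprim₁ _ (sub_mem hx (hSL (x := (0, x.2)) ⟨zero_mem _, h⟩)) (by simp)

/-- Unimodularity: `(u, v)` lies in `L` as soon as `v` corrects the pairing of `u` with `L`,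
and such a `v` exists because `u` pairs integrally with `L ∩ (ℚ^ι₁ × 0) = ℤ^ι₁`. -/
lemma exists_mem_of_mem_dualSub_fst [DecidableEq ι₂] (hd₂ : M₂.det ≠ 0)
    (hSL : (intSub ι₁).prod (intSub ι₂) ≤ L)
    (hint : ∀ x ∈ L, ∀ y ∈ L, IsInt (Bq M₁ x.1 y.1 + Bq M₂ x.2 y.2))
    (hprim₁ : ∀ x ∈ L, x.2 = 0 → x.1 ∈ intSub ι₁)
    (huni : ∀ v : (ι₁ → ℚ) × (ι₂ → ℚ),
      (∀ y ∈ L, IsInt (Bq M₁ v.1 y.1 + Bq M₂ v.2 y.2)) → v ∈ L)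
    {u : ι₁ → ℚ} (hu : u ∈ dualSub M₁) : ∃ v, (u, v) ∈ L := by
  obtain ⟨v, hv⟩ := exists_isInt_add_Bq M₂ hd₂ ((AddMonoidHom.snd _ _).comp L.subtype)
    (fun y l hl => by simpa using hint (0, l) (hSL ⟨zero_mem _, hl⟩) y y.2)
    ((AddMonoidHom.mk' (Bq M₁ u) (Bq_add_right M₁ u)).comp ((AddMonoidHom.fst _ _).comp L.subtype))
    (fun y hy => hu _ (hprim₁ y y.2 hy))
  exact ⟨v, huni (u, v) fun y hy => hv ⟨y, hy⟩⟩

lemma exists_mem_of_mem_dualSub_snd [DecidableEq ι₁] (hd₁ : M₁.det ≠ 0)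
    (hSL : (intSub ι₁).prod (intSub ι₂) ≤ L)
    (hint : ∀ x ∈ L, ∀ y ∈ L, IsInt (Bq M₁ x.1 y.1 + Bq M₂ x.2 y.2))
    (hprim₂ : ∀ x ∈ L, x.1 = 0 → x.2 ∈ intSub ι₂)
    (huni : ∀ v : (ι₁ → ℚ) × (ι₂ → ℚ),
      (∀ y ∈ L, IsInt (Bq M₁ v.1 y.1 + Bq M₂ v.2 y.2)) → v ∈ L)
    {v : ι₂ → ℚ} (hv : v ∈ dualSub M₂) : ∃ u, (u, v) ∈ L := by
  obtain ⟨u, hu⟩ := exists_isInt_add_Bq M₁ hd₁ ((AddMonoidHom.fst _ _).comp L.subtype)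
    (fun y l hl => by simpa using hint (l, 0) (hSL ⟨hl, zero_mem _⟩) y y.2)
    ((AddMonoidHom.mk' (Bq M₂ v) (Bq_add_right M₂ v)).comp ((AddMonoidHom.snd _ _).comp L.subtype))
    (fun y hy => hv _ (hprim₂ y y.2 hy))
  exact ⟨u, huni (u, v) fun y hy => add_comm (Bq M₂ v y.2) _ ▸ hu ⟨y, hy⟩⟩

lemma exists_discQuot_addEquiv [DecidableEq ι₁] [DecidableEq ι₂] (hd₁ : M₁.det ≠ 0)
    (hd₂ : M₂.det ≠ 0) (hSL : (intSub ι₁).prod (intSub ι₂) ≤ L)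
    (hint : ∀ x ∈ L, ∀ y ∈ L, IsInt (Bq M₁ x.1 y.1 + Bq M₂ x.2 y.2))
    (hprim₁ : ∀ x ∈ L, x.2 = 0 → x.1 ∈ intSub ι₁) (hprim₂ : ∀ x ∈ L, x.1 = 0 → x.2 ∈ intSub ι₂)
    (huni : ∀ v : (ι₁ → ℚ) × (ι₂ → ℚ),
      (∀ y ∈ L, IsInt (Bq M₁ v.1 y.1 + Bq M₂ v.2 y.2)) → v ∈ L) :
    ∃ ψ : discQuot M₁ ≃+ discQuot M₂, ∀ x (hx : x ∈ L),
      ψ (mk ⟨x.1, fst_mem_dualSub hSL hint hx⟩) = mk ⟨x.2, snd_mem_dualSub hSL hint hx⟩ := by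
  let π₁ : L →+ discQuot M₁ := (mk' _).comp <|
    ((AddMonoidHom.fst _ _).comp L.subtype).codRestrict _ fun x => fst_mem_dualSub hSL hint x.2
  let π₂ : L →+ discQuot M₂ := (mk' _).comp <|
    ((AddMonoidHom.snd _ _).comp L.subtype).codRestrict _ fun x => snd_mem_dualSub hSL hint x.2
  have hs₁ : Function.Surjective π₁ := by
    rintro ⟨u, hu⟩
    obtain ⟨v, hv⟩ := exists_mem_of_mem_dualSub_fst hd₂ hSL hint hprim₁ huni hu
    exact ⟨⟨(u, v), hv⟩, rfl⟩
  have hs₂ : Function.Surjective π₂ := by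
    rintro ⟨v, hv⟩
    obtain ⟨u, hu⟩ := exists_mem_of_mem_dualSub_snd hd₁ hSL hint hprim₂ huni hv
    exact ⟨⟨(u, v), hu⟩, rfl⟩
  have hker : π₁.ker = π₂.ker := by
    ext x
    simp only [π₁, π₂, AddMonoidHom.mem_ker, AddMonoidHom.comp_apply, mk'_apply, eq_zero_iff,
      AddSubgroup.mem_addSubgroupOf]
    exact fst_mem_intSub_iff_snd_mem_intSub hSL hprim₁ hprim₂ x.2
  obtain ⟨ψ, hψ⟩ := exists_addEquiv_comp_eq_of_ker_eq π₁ π₂ hs₁ hs₂ hker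
  exact ⟨ψ, fun x hx => hψ ⟨x, hx⟩⟩

end Gluing

theorem stmt10_general {ι₁ ι₂ : Type} [Fintype ι₁] [DecidableEq ι₁] [Fintype ι₂] [DecidableEq ι₂]
    (M₁ : Matrix ι₁ ι₁ ℤ) (M₂ : Matrix ι₂ ι₂ ℤ)
    (hd₁ : M₁.det ≠ 0) (hd₂ : M₂.det ≠ 0)
    (L : AddSubgroup ((ι₁ → ℚ) × (ι₂ → ℚ)))
    (hSL : (intSub ι₁).prod (intSub ι₂) ≤ L)
    (hint : ∀ x ∈ L, ∀ y ∈ L, IsInt (Bq M₁ x.1 y.1 + Bq M₂ x.2 y.2))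
    (hev : ∀ x ∈ L, ∃ z : ℤ, Bq M₁ x.1 x.1 + Bq M₂ x.2 x.2 = 2 * z)
    (hprim₁ : ∀ x ∈ L, x.2 = 0 → x.1 ∈ intSub ι₁)
    (hprim₂ : ∀ x ∈ L, x.1 = 0 → x.2 ∈ intSub ι₂)
    -- unimodularity of `L`: `L` equals its own dual lattice
    (huni : ∀ v : (ι₁ → ℚ) × (ι₂ → ℚ),
      (∀ y ∈ L, IsInt (Bq M₁ v.1 y.1 + Bq M₂ v.2 y.2)) → v ∈ L) :
    Nat.card (discQuot M₁) = Nat.card (discQuot M₂) ∧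
    ∃ ψ : discQuot M₁ ≃+ discQuot M₂,
      (∀ x ∈ L, ∀ (hx1 : x.1 ∈ dualSub M₁) (hx2 : x.2 ∈ dualSub M₂),
        ψ (QuotientAddGroup.mk ⟨x.1, hx1⟩) = QuotientAddGroup.mk ⟨x.2, hx2⟩) ∧
      (∀ (u : dualSub M₁) (v : dualSub M₂),
        ψ (QuotientAddGroup.mk u) = QuotientAddGroup.mk v →
          ∃ z : ℤ, Bq M₁ (u : ι₁ → ℚ) (u : ι₁ → ℚ)
            + Bq M₂ (v : ι₂ → ℚ) (v : ι₂ → ℚ) = 2 * z) := by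
  obtain ⟨ψ, hψ⟩ := exists_discQuot_addEquiv hd₁ hd₂ hSL hint hprim₁ hprim₂ huni
  refine ⟨Nat.card_congr ψ.toEquiv, ψ, fun x hx _ _ => hψ x hx, fun u v huv =>
    hev ((u : ι₁ → ℚ), (v : ι₂ → ℚ)) ?_⟩
  obtain ⟨w, hw⟩ := exists_mem_of_mem_dualSub_fst hd₂ hSL hint hprim₁ huni u.2
  have hvw : -w + v ∈ intSub ι₂ := by
    have := (hψ _ hw).symm.trans huv
    rwa [QuotientAddGroup.eq, AddSubgroup.mem_addSubgroupOf] at this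
  simpa using add_mem hw (hSL (x := (0, -w + v)) ⟨zero_mem _, hvw⟩)

/-- let `L` be an even unimodular finite index extension of
`S ⊕ T` with `S`, `T` primitive and `S^⊥ = T`.  Then `|disc S| = |disc T|` and
the anti-isometry `ψ` arising from the kernel is defined on all of `disc S`,
giving an anti-isomorphism `disc S → disc T`. -/
theorem stmt10 {ι₁ ι₂ : Type} [Fintype ι₁] [DecidableEq ι₁] [Fintype ι₂] [DecidableEq ι₂]
    (M₁ : Matrix ι₁ ι₁ ℤ) (M₂ : Matrix ι₂ ι₂ ℤ)
    (h₁ : M₁.IsSymm) (h₂ : M₂.IsSymm) (hd₁ : M₁.det ≠ 0) (hd₂ : M₂.det ≠ 0)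
    (he₁ : ∀ x : ι₁ → ℤ, 2 ∣ x ⬝ᵥ M₁.mulVec x) (he₂ : ∀ x : ι₂ → ℤ, 2 ∣ x ⬝ᵥ M₂.mulVec x)
    (L : AddSubgroup ((ι₁ → ℚ) × (ι₂ → ℚ)))
    (hSL : (intSub ι₁).prod (intSub ι₂) ≤ L)
    (hint : ∀ x ∈ L, ∀ y ∈ L, IsInt (Bq M₁ x.1 y.1 + Bq M₂ x.2 y.2))
    (hev : ∀ x ∈ L, ∃ z : ℤ, Bq M₁ x.1 x.1 + Bq M₂ x.2 x.2 = 2 * z)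
    (hfin : Finite (L ⧸ ((intSub ι₁).prod (intSub ι₂)).addSubgroupOf L))
    (hprim₁ : ∀ x ∈ L, x.2 = 0 → x.1 ∈ intSub ι₁)
    (hprim₂ : ∀ x ∈ L, x.1 = 0 → x.2 ∈ intSub ι₂)
    -- unimodularity of `L`: `L` equals its own dual lattice
    (huni : ∀ v : (ι₁ → ℚ) × (ι₂ → ℚ),
      (∀ y ∈ L, IsInt (Bq M₁ v.1 y.1 + Bq M₂ v.2 y.2)) → v ∈ L) :
    Nat.card (discQuot M₁) = Nat.card (discQuot M₂) ∧
    ∃ ψ : discQuot M₁ ≃+ discQuot M₂,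
      (∀ x ∈ L, ∀ (hx1 : x.1 ∈ dualSub M₁) (hx2 : x.2 ∈ dualSub M₂),
        ψ (QuotientAddGroup.mk ⟨x.1, hx1⟩) = QuotientAddGroup.mk ⟨x.2, hx2⟩) ∧
      (∀ (u : dualSub M₁) (v : dualSub M₂),
        ψ (QuotientAddGroup.mk u) = QuotientAddGroup.mk v →
          ∃ z : ℤ, Bq M₁ (u : ι₁ → ℚ) (u : ι₁ → ℚ)
            + Bq M₂ (v : ι₂ → ℚ) (v : ι₂ → ℚ) = 2 * z) :=
  stmt10_general M₁ M₂ hd₁ hd₂ L hSL hint hev hprim₁ hprim₂ huni
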